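/- arXiv:2103.01503 — 5 statements merged into one kernel-verified Lean document; each statement's English description precedes it below -/
import Mathlib

section
/- Let 1 ≤ k ≤ n be integers and μ > 0 a real. Let p : {1,…,n} → [0,1] satisfy p(i) = 1 for all i with n−k < i ≤ n. Then 1/k + (1/(μk)) ∫₀¹ (1/ε) · (Σ_{i=1}^{n} C(n,i) ε^i (1−ε)^{n−i} p(i)) dε = (1/k)·(1 + (1/μ) Σ_{i=n−k+1}^{n} 1/i) + (1/(μk)) Σ_{i=1}^{n−k} p(i)/i, where C(n,i) denotes the binomial coefficient. -/
/-!
Dividing the `i`-th term of `P_e(ε, n)` by `ε` leaves `C(n,i) ε^(i-1) (1-ε)^(n-i)`, whose integral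
over `[0,1]` is the Beta value `C(n,i) (i-1)! (n-i)! / n! = 1/i`. So the integral equals
`∑ p(i)/i`, and the terms with `i > n - k`, where `p(i) = 1`, form the harmonic tail.
-/
open Finset intervalIntegral
open scoped Nat

theorem integral_pow_mul_one_sub_pow (a b : ℕ) :
    ∫ x in (0:ℝ)..1, x ^ a * (1 - x) ^ b = (a ! * b ! : ℝ) / (a + b + 1)! := by
  have hB := Complex.betaIntegral_eq_Gamma_mul_div (a + 1) (b + 1)
    (by norm_cast; positivity) (by norm_cast; positivity)
  simp only [Complex.betaIntegral, add_sub_cancel_right, Complex.cpow_natCast] at hB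
  rw [show (a : ℂ) + 1 + (b + 1) = ((a + b + 1 : ℕ) : ℂ) + 1 by push_cast; ring,
    Complex.Gamma_nat_eq_factorial, Complex.Gamma_nat_eq_factorial,
    Complex.Gamma_nat_eq_factorial] at hB
  apply Complex.ofReal_injective
  push_cast [← intervalIntegral.integral_ofReal]
  exact hB

theorem choose_mul_integral_pow_pred_mul_one_sub_pow {n i : ℕ} (hi : 1 ≤ i) (hin : i ≤ n) :
    (n.choose i : ℝ) * ∫ x in (0:ℝ)..1, x ^ (i - 1) * (1 - x) ^ (n - i) = 1 / i := by
  obtain ⟨j, rfl⟩ := Nat.exists_eq_add_of_le' hi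
  obtain ⟨m, rfl⟩ := Nat.exists_eq_add_of_le hin
  rw [integral_pow_mul_one_sub_pow, Nat.cast_choose ℝ hin]
  simp only [Nat.add_sub_cancel, Nat.add_sub_cancel_left]
  rw [show j + m + 1 = j + 1 + m by ring, Nat.factorial_succ]
  push_cast
  field_simp

/-- The paper's `P_e(ε, n)`. -/
noncomputable def decodingFailureProb (n : ℕ) (p : ℕ → ℝ) (ε : ℝ) : ℝ :=
  ∑ i ∈ Icc 1 n, (n.choose i : ℝ) * ε ^ i * (1 - ε) ^ (n - i) * p i

theorem integral_one_div_mul_decodingFailureProb (n : ℕ) (p : ℕ → ℝ) :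
    ∫ ε in (0:ℝ)..1, 1 / ε * decodingFailureProb n p ε = ∑ i ∈ Icc 1 n, p i / i := by
  have hdiv : ∀ ε ∈ Set.uIoc (0:ℝ) 1, 1 / ε * decodingFailureProb n p ε
      = ∑ i ∈ Icc 1 n, (n.choose i * p i) * (ε ^ (i - 1) * (1 - ε) ^ (n - i)) := by
    intro ε hε
    have hε0 : ε ≠ 0 := by
      rw [Set.uIoc_of_le zero_le_one] at hε
      exact hε.1.ne'
    rw [decodingFailureProb, mul_sum]
    refine sum_congr rfl fun i hi => ?_
    obtain ⟨j, rfl⟩ := Nat.exists_eq_add_of_le' (mem_Icc.mp hi).1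
    rw [pow_succ', Nat.add_sub_cancel]
    field_simp
  rw [integral_congr_ae (.of_forall hdiv), integral_finsetSum fun i _ =>
    (Continuous.intervalIntegrable (by fun_prop) 0 1)]
  refine sum_congr rfl fun i hi => ?_
  rw [integral_const_mul, mul_comm (n.choose i : ℝ), mul_assoc,
    choose_mul_integral_pow_pred_mul_one_sub_pow (mem_Icc.mp hi).1 (mem_Icc.mp hi).2, mul_one_div]

theorem sum_Icc_one_consecutive {M : Type*} [AddCommMonoid M] (f : ℕ → M) {m n : ℕ}
    (hmn : m ≤ n) : ∑ i ∈ Icc 1 m, f i + ∑ i ∈ Icc (m + 1) n, f i = ∑ i ∈ Icc 1 n, f i := by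
  simpa only [← Icc_add_one_left_eq_Ioc, zero_add] using sum_Ioc_consecutive f m.zero_le hmn

theorem stmt1_general (n k : ℕ) (μ : ℝ)
    (p : ℕ → ℝ)
    (hp1 : ∀ i, n - k < i → i ≤ n → p i = 1) :
    1 / (k : ℝ)
      + (1 / (μ * k)) * ∫ ε in (0:ℝ)..1,
          (1 / ε) * ∑ i ∈ Finset.Icc 1 n, (n.choose i : ℝ) * ε ^ i * (1 - ε) ^ (n - i) * p i
    = (1 / (k : ℝ)) * (1 + (1 / μ) * ∑ i ∈ Finset.Icc (n - k + 1) n, (1 : ℝ) / i)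
      + (1 / (μ * k)) * ∑ i ∈ Finset.Icc 1 (n - k), p i / i := by
  have hreliable : ∑ i ∈ Icc (n - k + 1) n, p i / i = ∑ i ∈ Icc (n - k + 1) n, (1 : ℝ) / i :=
    sum_congr rfl fun i hi => by
      rw [hp1 i (Nat.lt_of_succ_le (mem_Icc.mp hi).1) (mem_Icc.mp hi).2]
  have hintegral := integral_one_div_mul_decodingFailureProb n p
  simp only [decodingFailureProb] at hintegral
  rw [hintegral, ← sum_Icc_one_consecutive _ (n.sub_le k), hreliable]
  ring

/-- For `1 ≤ k ≤ n`, `μ > 0`, and a conditional-failure profile `p : {1,…,n} → [0,1]`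
with `p(i) = 1` for `n−k < i ≤ n`:
`1/k + (1/(μk)) ∫₀¹ (1/ε)·(Σ_{i=1}^{n} C(n,i) ε^i (1−ε)^{n−i} p(i)) dε
  = (1/k)·(1 + (1/μ) Σ_{i=n−k+1}^{n} 1/i) + (1/(μk)) Σ_{i=1}^{n−k} p(i)/i`. -/
theorem stmt1 (n k : ℕ) (hk : 1 ≤ k) (hkn : k ≤ n) (μ : ℝ) (hμ : 0 < μ)
    (p : ℕ → ℝ) (hp : ∀ i, 1 ≤ i → i ≤ n → p i ∈ Set.Icc (0:ℝ) 1)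
    (hp1 : ∀ i, n - k < i → i ≤ n → p i = 1) :
    1 / (k : ℝ)
      + (1 / (μ * k)) * ∫ ε in (0:ℝ)..1,
          (1 / ε) * ∑ i ∈ Finset.Icc 1 n, (n.choose i : ℝ) * ε ^ i * (1 - ε) ^ (n - i) * p i
    = (1 / (k : ℝ)) * (1 + (1 / μ) * ∑ i ∈ Finset.Icc (n - k + 1) n, (1 : ℝ) / i)
      + (1 / (μ * k)) * ∑ i ∈ Finset.Icc 1 (n - k), p i / i :=
  stmt1_general n k μ p hp1
end

section
/- Let V be a linear subspace of ℝⁿ of dimension d. Then the number of vectors in {−1,1}ⁿ that lie in V is at most 2^d; equivalently, if r is chosen uniformly at random from {−1,1}ⁿ, then Pr(r ∈ V) ≤ 2^{−(n−d)} = 2^{−dim(V^⊥)}. -/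
/-!
The coordinate functionals restricted to `V` contain a linearly independent subfamily with the same
span, hence at most `dim V` coordinates on which only `0 ∈ V` vanishes. A vector of `V` with entries
in a fixed finite set `A` is therefore determined by those coordinates, so there are at most
`|A| ^ dim V` of them; for the sign vectors `A = {±1}`.
-/

open Function

namespace Submodule

variable {K ι : Type*} [Field K] [Fintype ι]

theorem exists_finset_card_le_finrank_eq_zero_of_forall_mem_eq_zero (V : Submodule K (ι → K)) :
    ∃ S : Finset ι, S.card ≤ Module.finrank K V ∧
      ∀ x ∈ V, (∀ i ∈ S, x i = 0) → x = 0 := by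
  classical
  let coord : ι → Module.Dual K V := fun i => (LinearMap.proj i).comp V.subtype
  obtain ⟨κ, a, ha, hspan, hli⟩ := exists_linearIndependent' K coord
  have : Fintype κ := Fintype.ofInjective a ha
  refine ⟨Finset.univ.map ⟨a, ha⟩, ?_, fun x hx hvanish => ?_⟩
  · rw [Finset.card_map, Finset.card_univ, ← Subspace.dual_finrank_eq]
    exact hli.fintype_card_le_finrank
  · have hker : span K (Set.range coord) ≤ LinearMap.ker (Module.Dual.eval K V ⟨x, hx⟩) := by
      rw [← hspan, span_le]
      rintro _ ⟨k, rfl⟩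
      exact hvanish (a k) (Finset.mem_map_of_mem _ (Finset.mem_univ k))
    funext i
    exact hker (subset_span ⟨i, rfl⟩)

theorem card_filter_comp_mem_le_pow_finrank [DecidableEq ι] {α : Type*} [Fintype α] [Nonempty α]
    {f : α → K} (hf : Injective f) (V : Submodule K (ι → K))
    [DecidablePred fun s : ι → α => (fun i => f (s i)) ∈ V] :
    (Finset.univ.filter fun s : ι → α => (fun i => f (s i)) ∈ V).card ≤
      Fintype.card α ^ Module.finrank K V := by
  obtain ⟨S, hcard, hzero⟩ := V.exists_finset_card_le_finrank_eq_zero_of_forall_mem_eq_zero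
  have hinj : Set.InjOn (fun s : ι → α => fun i : S => s i)
      (Finset.univ.filter fun s : ι → α => (fun i => f (s i)) ∈ V) := by
    intro s hs t ht hst
    simp only [Finset.coe_filter, Finset.mem_univ, true_and, Set.mem_ofPred_eq] at hs ht
    have hdiff := hzero _ (V.sub_mem hs ht) fun i hi => by
      simpa [sub_eq_zero] using congrArg f (congrFun hst ⟨i, hi⟩)
    exact hf.comp_left (sub_eq_zero.mp hdiff)
  calc _ ≤ Fintype.card (S → α) :=
        Finset.card_le_card_of_injOn _ (fun _ _ => Finset.mem_univ _) hinj
    _ = Fintype.card α ^ S.card := by simp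
    _ ≤ Fintype.card α ^ Module.finrank K V := Nat.pow_le_pow_right Fintype.card_pos hcard

end Submodule

open Classical in
/-- If `V` is a `d`-dimensional linear subspace of `ℝⁿ`, then the number of vectors in
`{−1,1}ⁿ` lying in `V` is at most `2^d`; equivalently, a uniformly random vector of
`{−1,1}ⁿ` lies in `V` with probability at most `2^{−(n−d)} = 2^{−dim(V^⊥)}`. -/
theorem stmt2 (n d : ℕ) (V : Submodule ℝ (Fin n → ℝ)) (hd : Module.finrank ℝ V = d) :
    ((Finset.univ.filter
        (fun s : Fin n → Bool => (fun i => if s i then (1:ℝ) else -1) ∈ V)).card ≤ 2 ^ d)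
    ∧ (((Finset.univ.filter
        (fun s : Fin n → Bool => (fun i => if s i then (1:ℝ) else -1) ∈ V)).card : ℝ) / 2 ^ n
          ≤ (2:ℝ) ^ (-((n : ℤ) - (d : ℤ)))) := by
  have hsign : Injective fun b : Bool => if b then (1 : ℝ) else -1 := by
    intro b c; cases b <;> cases c <;> norm_num
  have hcount := Submodule.card_filter_comp_mem_le_pow_finrank hsign V
  rw [Fintype.card_bool, hd] at hcount
  refine ⟨hcount, ?_⟩
  rw [div_le_iff₀ (by positivity), zpow_neg, ← zpow_natCast, inv_mul_eq_div,
    ← zpow_sub₀ two_ne_zero, sub_sub_cancel, zpow_natCast]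
  exact_mod_cast hcount
end

section
/- Let 1 ≤ k ≤ m be integers. If v₁, …, v_k are chosen independently and uniformly at random from {−1,1}^m, then the probability that v₁, …, v_k are linearly independent over ℝ is at least ∏_{i=1}^{k} (1 − 2^{i−1−m}); equivalently, the number of k-tuples (v₁,…,v_k) ∈ ({−1,1}^m)^k consisting of linearly independent vectors is at least 2^{km} · ∏_{i=1}^{k} (1 − 2^{i−1−m}). -/
/-!
Odlyzko's lemma: a subspace `W ≤ K^ι` of dimension `d` is determined by `d` of the coordinates
(the coordinate functionals span `W*`, and a basis of `W*` can be chosen among them), so `W`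
contains at most `|C|^d` vectors with entries in a finite set `C`. Hence if `v₁, …, vᵢ` are linearly
independent sign vectors, at most `2^i` sign vectors lie in their span and at least `2^m - 2^i`
extend them to an independent family; multiplying over `i < k` counts the independent `k`-tuples.
-/

open Finset Module Submodule Classical

variable {K ι : Type*} [Field K]

theorem Submodule.exists_finset_card_eq_finrank_forall_eq_zero [Finite ι]
    (W : Submodule K (ι → K)) :
    ∃ S : Finset ι, #S = finrank K W ∧ ∀ x ∈ W, (∀ j ∈ S, x j = 0) → x = 0 := by
  set coord : ι → Dual K W := fun j => (LinearMap.proj j).comp W.subtype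
  have hspan : span K (Set.range coord) = ⊤ := by
    refine span_eq_top_of_ne_zero fun z hz => ?_
    obtain ⟨j, hj⟩ := Function.ne_iff.1 (Subtype.coe_ne_coe.2 hz)
    exact ⟨coord j, Set.mem_range_self j, hj⟩
  obtain ⟨t, hts, htcard, htspan, -⟩ := exists_finset_span_eq_linearIndepOn K (Set.range coord)
  choose idx hidx using fun φ : t => hts φ.2
  refine ⟨univ.image idx, ?_, fun x hx hS => ?_⟩
  · rw [card_image_of_injective _ fun φ ψ h => Subtype.ext (by rw [← hidx φ, ← hidx ψ, h]),
      card_univ, Fintype.card_coe, htcard, hspan, finrank_top, Subspace.dual_finrank_eq]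
  · have hker : span K (Set.range coord) ≤ LinearMap.ker (Dual.eval K W ⟨x, hx⟩) := by
      rw [← htspan, span_le]
      intro φ hφ
      have hφ_coord : coord (idx ⟨φ, hφ⟩) = φ := hidx ⟨φ, hφ⟩
      rw [SetLike.mem_coe, ← hφ_coord]
      exact hS _ (mem_image_of_mem _ (mem_univ _))
    funext j
    exact hker (subset_span (Set.mem_range_self j))

variable [Fintype ι] [DecidableEq ι] {C : Type*} [Fintype C] {σ : C → K}

theorem Submodule.card_filter_comp_mem_le_pow_finrank_s3 (hσ : Function.Injective σ)
    (W : Submodule K (ι → K)) :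
    #{v : ι → C | σ ∘ v ∈ W} ≤ Fintype.card C ^ finrank K W := by
  obtain ⟨S, hScard, hS⟩ := W.exists_finset_card_eq_finrank_forall_eq_zero
  have hinj : Set.InjOn (fun v (j : S) => v j) {v : ι → C | σ ∘ v ∈ W} := by
    intro v hv w hw hvw
    have hdiff : σ ∘ v - σ ∘ w = 0 :=
      hS _ (sub_mem hv hw) fun j hj => by simp [congrFun hvw ⟨j, hj⟩]
    exact hσ.comp_left (sub_eq_zero.1 hdiff)
  calc #{v : ι → C | σ ∘ v ∈ W}
      ≤ #(univ : Finset (S → C)) :=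
        card_le_card_of_injOn _ (fun _ _ => mem_univ _) (by simpa using hinj)
    _ = Fintype.card C ^ finrank K W := by simp [hScard]

theorem card_pow_sub_pow_le_card_filter_comp_notMem_span [Nonempty C]
    (hσ : Function.Injective σ) {k : ℕ} (f : Fin k → ι → C) :
    Fintype.card C ^ Fintype.card ι - Fintype.card C ^ k
      ≤ #{x : ι → C | σ ∘ x ∉ span K (Set.range fun a => σ ∘ f a)} := by
  rw [filter_not, card_sdiff_of_subset (filter_subset _ _), card_univ, Fintype.card_fun]
  refine Nat.sub_le_sub_left ((card_filter_comp_mem_le_pow_finrank_s3 hσ _).trans ?_) _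
  exact Nat.pow_le_pow_right Fintype.card_pos
    ((finrank_range_le_card (R := K) fun a => σ ∘ f a).trans (Fintype.card_fin k).le)

variable (ι σ) in
noncomputable def indepTuples (k : ℕ) : Finset (Fin k → ι → C) :=
  {v | LinearIndependent K fun a => σ ∘ v a}

theorem card_indepTuples_mul_le_card_indepTuples_succ [Nonempty C]
    (hσ : Function.Injective σ) (k : ℕ) :
    #(indepTuples ι σ k) * (Fintype.card C ^ Fintype.card ι - Fintype.card C ^ k)
      ≤ #(indepTuples ι σ (k + 1)) := by
  set fresh : (Fin k → ι → C) → Finset (ι → C) := fun f =>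
    {x | σ ∘ x ∉ span K (Set.range fun a => σ ∘ f a)}
  have hcons (x : ι → C) (f : Fin k → ι → C) :
      (fun a => σ ∘ (Fin.cons x f : Fin (k + 1) → ι → C) a) =
        Fin.cons (σ ∘ x) fun a => σ ∘ f a := by
    funext a
    cases a using Fin.cases <;> rfl
  calc #(indepTuples ι σ k) * (Fintype.card C ^ Fintype.card ι - Fintype.card C ^ k)
      ≤ ∑ f ∈ indepTuples ι σ k, #(fresh f) := by
        rw [← smul_eq_mul]
        exact card_nsmul_le_sum _ _ _ fun f _ =>
          card_pow_sub_pow_le_card_filter_comp_notMem_span hσ f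
    _ = #((indepTuples ι σ k).sigma fresh) := (card_sigma _ _).symm
    _ ≤ #(indepTuples ι σ (k + 1)) := by
        refine card_le_card_of_injOn (fun p => Fin.cons p.2 p.1) (fun ⟨f, x⟩ hp => ?_) ?_
        · simp only [mem_coe, mem_sigma, indepTuples, fresh, mem_filter, mem_univ, true_and]
            at hp ⊢
          rw [hcons, linearIndependent_finCons]
          exact hp
        · rintro ⟨f, x⟩ - ⟨g, y⟩ - h
          obtain ⟨rfl, rfl⟩ := Fin.cons_inj.1 h
          rfl

theorem prod_range_pow_sub_pow_le_card_indepTuples [Nonempty C] (hσ : Function.Injective σ)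
    (k : ℕ) :
    ∏ i ∈ range k, (Fintype.card C ^ Fintype.card ι - Fintype.card C ^ i)
      ≤ #(indepTuples ι σ k) := by
  induction k with
  | zero => exact card_pos.2 ⟨_, mem_filter.2 ⟨mem_univ Fin.elim0, linearIndependent_empty_type⟩⟩
  | succ k ih =>
    rw [prod_range_succ]
    exact (Nat.mul_le_mul_right _ ih).trans (card_indepTuples_mul_le_card_indepTuples_succ hσ k)

theorem Nat.cast_prod_range_pow_sub_pow {R : Type*} [CommRing R] {q : ℕ} (hq : 1 ≤ q)
    (m k : ℕ) :
    ((∏ i ∈ range k, (q ^ m - q ^ i) : ℕ) : R) = ∏ i ∈ range k, ((q : R) ^ m - (q : R) ^ i) := by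
  by_cases hkm : k ≤ m
  · rw [Nat.cast_prod]
    refine prod_congr rfl fun i hi => ?_
    rw [Nat.cast_sub (Nat.pow_le_pow_right hq (by grind)), Nat.cast_pow, Nat.cast_pow]
  · -- the factors with `i > m` differ (truncated subtraction), but both products vanish at `i = m`
    have hm : m ∈ range k := mem_range.2 (not_le.1 hkm)
    rw [prod_eq_zero hm (by simp), prod_eq_zero hm (by simp), Nat.cast_zero]

theorem pow_mul_prod_Icc_one_sub_zpow {F : Type*} [Field F] {q : F} (hq : q ≠ 0) (m k : ℕ) :
    q ^ (k * m) * ∏ i ∈ Icc 1 k, (1 - q ^ ((i : ℤ) - 1 - m)) = ∏ i ∈ range k, (q ^ m - q ^ i) := by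
  induction k with
  | zero => simp
  | succ k ih =>
    have hshift : q ^ m * q ^ ((k : ℤ) - m) = q ^ k := by
      rw [← zpow_natCast, ← zpow_add₀ hq, add_sub_cancel, zpow_natCast]
    rw [prod_Icc_succ_top (by omega), prod_range_succ, ← ih, Nat.succ_mul, pow_add]
    push_cast
    rw [add_sub_cancel_right, ← hshift]
    ring

open Classical in
theorem stmt3_general (m k : ℕ) :
    ((2:ℝ) ^ (k * m) * ∏ i ∈ Finset.Icc 1 k, (1 - (2:ℝ) ^ ((i : ℤ) - 1 - m))
      ≤ ((Finset.univ.filter (fun v : Fin k → Fin m → Bool =>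
            LinearIndependent ℝ
              (fun a : Fin k => fun j : Fin m => if v a j then (1:ℝ) else -1))).card : ℝ))
    ∧ (∏ i ∈ Finset.Icc 1 k, (1 - (2:ℝ) ^ ((i : ℤ) - 1 - m))
      ≤ ((Finset.univ.filter (fun v : Fin k → Fin m → Bool =>
            LinearIndependent ℝ
              (fun a : Fin k => fun j : Fin m => if v a j then (1:ℝ) else -1))).card : ℝ)
          / 2 ^ (k * m)) := by
  have hsign : Function.Injective fun b : Bool => if b then (1 : ℝ) else -1 := by
    intro a b
    cases a <;> cases b <;> norm_num
  have hcount := prod_range_pow_sub_pow_le_card_indepTuples (ι := Fin m) hsign k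
  simp only [Fintype.card_bool, Fintype.card_fin] at hcount
  have hcast := Nat.cast_prod_range_pow_sub_pow (R := ℝ) one_le_two m k
  rw [Nat.cast_ofNat] at hcast
  have hbound : (2:ℝ) ^ (k * m) * ∏ i ∈ Icc 1 k, (1 - (2:ℝ) ^ ((i : ℤ) - 1 - m))
      ≤ #(indepTuples (Fin m) (fun b : Bool => if b then (1 : ℝ) else -1) k) := by
    rw [pow_mul_prod_Icc_one_sub_zpow two_ne_zero, ← hcast]
    exact_mod_cast hcount
  refine ⟨hbound, ?_⟩
  rw [le_div_iff₀ (by positivity), mul_comm]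
  exact hbound

open Classical in
/-- For `1 ≤ k ≤ m`, the number of `k`-tuples of vectors in `{−1,1}^m` that are linearly
independent over `ℝ` is at least `2^{km} · ∏_{i=1}^{k} (1 − 2^{i−1−m})`; equivalently,
`k` vectors chosen independently and uniformly at random from `{−1,1}^m` are linearly
independent with probability at least `∏_{i=1}^{k} (1 − 2^{i−1−m})`. -/
theorem stmt3 (m k : ℕ) (hk : 1 ≤ k) (hkm : k ≤ m) :
    ((2:ℝ) ^ (k * m) * ∏ i ∈ Finset.Icc 1 k, (1 - (2:ℝ) ^ ((i : ℤ) - 1 - m))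
      ≤ ((Finset.univ.filter (fun v : Fin k → Fin m → Bool =>
            LinearIndependent ℝ
              (fun a : Fin k => fun j : Fin m => if v a j then (1:ℝ) else -1))).card : ℝ))
    ∧ (∏ i ∈ Finset.Icc 1 k, (1 - (2:ℝ) ^ ((i : ℤ) - 1 - m))
      ≤ ((Finset.univ.filter (fun v : Fin k → Fin m → Bool =>
            LinearIndependent ℝ
              (fun a : Fin k => fun j : Fin m => if v a j then (1:ℝ) else -1))).card : ℝ)
          / 2 ^ (k * m)) :=
  stmt3_general m k
end

section
/- Let 1 ≤ k < n be integers and let v be an integer with 0 ≤ v ≤ n−k−1. Then Σ_{i=1}^{n−k} (1/i)·q_{n,k}(i) ≤ v/(n−k−v+1) + k·(1 + ln(n−k−v))·2^{−v}, where q_{n,k}(i) := 1 − ∏_{j=1}^{k} (1 − 2^{j−1−n+i}). -/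
/-!
Split the sum at `w = n - k - v`. The union bound gives `q_{n,k}(i) ≤ k · 2^(i+k-n-1)`, so with
`1/i ≤ 1` the first `w` terms contribute at most `k · ∑_{i ≤ w} 2^(i+k-n-1) ≤ k · 2^(-v)`.
Each of the last `v` terms is at most `1/i ≤ 1/(w+1)`, since `0 ≤ q_{n,k}(i) ≤ 1`.
-/

open Finset

theorem Finset.one_sub_sum_le_prod_one_sub {ι R : Type*} [CommRing R] [PartialOrder R]
    [IsOrderedRing R] (s : Finset ι) (a : ι → R) (h0 : ∀ j ∈ s, 0 ≤ a j)
    (h1 : ∀ j ∈ s, a j ≤ 1) :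
    1 - ∑ j ∈ s, a j ≤ ∏ j ∈ s, (1 - a j) := by
  classical
  induction s using Finset.induction_on with
  | empty => simp
  | @insert x s hx ih =>
    rw [sum_insert hx, prod_insert hx]
    have hx0 := h0 x (mem_insert_self x s)
    have hx1 : 0 ≤ 1 - a x := sub_nonneg.2 (h1 x (mem_insert_self x s))
    have hs := ih (fun j hj ↦ h0 j (mem_insert_of_mem hj))
      (fun j hj ↦ h1 j (mem_insert_of_mem hj))
    have hS : 0 ≤ ∑ j ∈ s, a j := sum_nonneg fun j hj ↦ h0 j (mem_insert_of_mem hj)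
    calc 1 - (a x + ∑ j ∈ s, a j) ≤ 1 - (a x + ∑ j ∈ s, a j) + a x * ∑ j ∈ s, a j :=
          le_add_of_nonneg_right (mul_nonneg hx0 hS)
      _ = (1 - a x) * (1 - ∑ j ∈ s, a j) := by ring
      _ ≤ (1 - a x) * ∏ j ∈ s, (1 - a j) := mul_le_mul_of_nonneg_left hs hx1

theorem sum_Ioc_two_zpow_le (c : ℤ) (w : ℕ) :
    ∑ i ∈ Ioc 0 w, (2 : ℝ) ^ ((i : ℤ) + c) ≤ 2 ^ ((w : ℤ) + c + 1) := by
  induction w with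
  | zero => simp [zpow_nonneg]
  | succ w ih =>
    have hnext : ((w + 1 : ℕ) : ℤ) + c = w + c + 1 := by push_cast; ring
    rw [sum_Ioc_succ_top w.zero_le, hnext, zpow_add_one₀ two_ne_zero (_ + 1)]
    linarith

/-- The paper's `q_{n,k}(i)`. -/
noncomputable def rankLossBound (n k i : ℕ) : ℝ :=
  1 - ∏ j ∈ Icc 1 k, (1 - (2 : ℝ) ^ ((j : ℤ) - 1 - n + i))

section rankLossBound

variable {n k i : ℕ}

lemma two_zpow_le_of_mem_Icc {j : ℕ} (hj : j ∈ Icc 1 k) :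
    (2 : ℝ) ^ ((j : ℤ) - 1 - n + i) ≤ 2 ^ ((i : ℤ) + k - n - 1) := by
  have hjk : (j : ℤ) ≤ k := by exact_mod_cast (mem_Icc.1 hj).2
  exact zpow_le_zpow_right₀ one_le_two (by omega)

lemma two_zpow_le_one (h : i + k ≤ n + 1) : (2 : ℝ) ^ ((i : ℤ) + k - n - 1) ≤ 1 :=
  zpow_le_one_of_nonpos₀ one_le_two (by omega)

lemma one_sub_two_zpow_nonneg (h : i + k ≤ n + 1) {j : ℕ} (hj : j ∈ Icc 1 k) :
    0 ≤ 1 - (2 : ℝ) ^ ((j : ℤ) - 1 - n + i) :=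
  sub_nonneg.2 ((two_zpow_le_of_mem_Icc hj).trans (two_zpow_le_one h))

lemma rankLossBound_nonneg (h : i + k ≤ n + 1) : 0 ≤ rankLossBound n k i :=
  sub_nonneg.2 <| prod_le_one (fun _ hj ↦ one_sub_two_zpow_nonneg h hj)
    fun _ _ ↦ sub_le_self _ (zpow_nonneg zero_le_two _)

lemma rankLossBound_le_one (h : i + k ≤ n + 1) : rankLossBound n k i ≤ 1 :=
  sub_le_self _ <| prod_nonneg fun _ hj ↦ one_sub_two_zpow_nonneg h hj

/-- Union bound over the `k` factors, each at most the one with `j = k`. -/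
lemma rankLossBound_le (h : i + k ≤ n + 1) :
    rankLossBound n k i ≤ k * 2 ^ ((i : ℤ) + k - n - 1) := by
  have hunion := one_sub_sum_le_prod_one_sub (Icc 1 k)
    (fun j ↦ (2 : ℝ) ^ ((j : ℤ) - 1 - n + i))
    (fun _ _ ↦ zpow_nonneg zero_le_two _)
    fun _ hj ↦ (two_zpow_le_of_mem_Icc hj).trans (two_zpow_le_one h)
  have hsum :
      ∑ j ∈ Icc 1 k, (2 : ℝ) ^ ((j : ℤ) - 1 - n + i) ≤ k * 2 ^ ((i : ℤ) + k - n - 1) := by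
    simpa using sum_le_card_nsmul _ _ _ fun _ hj ↦ two_zpow_le_of_mem_Icc (n := n) (i := i) hj
  unfold rankLossBound
  linarith

end rankLossBound

lemma sum_Ioc_zero_one_div_mul_rankLossBound_le {n k w : ℕ} (hw : w + k ≤ n) :
    ∑ i ∈ Ioc 0 w, 1 / (i : ℝ) * rankLossBound n k i ≤ k * 2 ^ ((w : ℤ) + k - n) := by
  have hterm : ∀ i ∈ Ioc 0 w,
      1 / (i : ℝ) * rankLossBound n k i ≤ k * 2 ^ ((i : ℤ) + k - n - 1) := by
    intro i hi
    obtain ⟨hi0, hiw⟩ := mem_Ioc.1 hi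
    have hik : i + k ≤ n + 1 := by omega
    calc 1 / (i : ℝ) * rankLossBound n k i ≤ 1 * rankLossBound n k i := by
          gcongr
          · exact rankLossBound_nonneg hik
          · exact div_le_one_of_le₀ (by exact_mod_cast hi0) i.cast_nonneg
      _ ≤ k * 2 ^ ((i : ℤ) + k - n - 1) := by rw [one_mul]; exact rankLossBound_le hik
  calc ∑ i ∈ Ioc 0 w, 1 / (i : ℝ) * rankLossBound n k i
      ≤ ∑ i ∈ Ioc 0 w, k * (2 : ℝ) ^ ((i : ℤ) + k - n - 1) := sum_le_sum hterm
    _ = k * ∑ i ∈ Ioc 0 w, (2 : ℝ) ^ ((i : ℤ) + (k - n - 1)) := by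
        simp only [mul_sum, add_sub_assoc]
    _ ≤ k * 2 ^ ((w : ℤ) + (k - n - 1) + 1) := by gcongr; exact sum_Ioc_two_zpow_le _ w
    _ = k * 2 ^ ((w : ℤ) + k - n) := by ring_nf

lemma sum_Ioc_one_div_mul_rankLossBound_le {n k w m : ℕ} (hm : m + k ≤ n + 1) :
    ∑ i ∈ Ioc w m, 1 / (i : ℝ) * rankLossBound n k i ≤ (m - w : ℕ) / ((w : ℝ) + 1) := by
  calc ∑ i ∈ Ioc w m, 1 / (i : ℝ) * rankLossBound n k i
      ≤ ∑ _i ∈ Ioc w m, 1 / ((w : ℝ) + 1) := by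
        refine sum_le_sum fun i hi ↦ ?_
        obtain ⟨hwi, him⟩ := mem_Ioc.1 hi
        calc 1 / (i : ℝ) * rankLossBound n k i ≤ 1 / (i : ℝ) * 1 := by
              gcongr; exact rankLossBound_le_one (by omega)
          _ ≤ 1 / ((w : ℝ) + 1) := by
              rw [mul_one]; gcongr; exact_mod_cast hwi
    _ = (m - w : ℕ) / ((w : ℝ) + 1) := by
        rw [sum_const, Nat.card_Ioc, nsmul_eq_mul, mul_one_div]

theorem stmt10_general (n k v : ℕ) (hkn : k < n) (hv : v ≤ n - k - 1) :
    ∑ i ∈ Finset.Icc 1 (n - k),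
        (1 / (i : ℝ)) * (1 - ∏ j ∈ Finset.Icc 1 k, (1 - (2:ℝ) ^ ((j : ℤ) - 1 - n + i)))
      ≤ (v : ℝ) / ((n : ℝ) - k - v + 1)
        + (k : ℝ) * (1 + Real.log ((n : ℝ) - k - v)) * (2:ℝ) ^ (-(v : ℤ)) := by
  obtain ⟨w, rfl⟩ : ∃ w, n = w + k + v := ⟨n - k - v, by omega⟩
  have hw : (1 : ℝ) ≤ w := by exact_mod_cast (by omega : 1 ≤ w)
  change ∑ i ∈ Icc 1 (w + k + v - k), 1 / (i : ℝ) * rankLossBound (w + k + v) k i ≤ _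
  rw [show Icc 1 (w + k + v - k) = Ioc 0 (w + v) by rw [show w + k + v - k = w + v by omega]; rfl,
    ← sum_Ioc_consecutive _ w.zero_le (w.le_add_right v)]
  have hhead := sum_Ioc_zero_one_div_mul_rankLossBound_le (n := w + k + v) (k := k) (w := w)
    (by omega)
  have htail := sum_Ioc_one_div_mul_rankLossBound_le (n := w + k + v) (k := k) (w := w)
    (m := w + v) (by omega)
  rw [show (w : ℤ) + k - (w + k + v : ℕ) = -v by push_cast; ring] at hhead
  rw [Nat.add_sub_cancel_left] at htail
  push_cast
  rw [show (w : ℝ) + k + v - k - v = w by ring]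
  have hlog : (k : ℝ) * 2 ^ (-(v : ℤ)) ≤ k * (1 + Real.log w) * 2 ^ (-(v : ℤ)) := by
    gcongr ?_ * _
    exact le_mul_of_one_le_right k.cast_nonneg (by linarith [Real.log_nonneg hw])
  linarith

/-- Let `1 ≤ k < n` be integers and let `v` be an integer with `0 ≤ v ≤ n−k−1`. Then
`Σ_{i=1}^{n−k} (1/i)·q_{n,k}(i) ≤ v/(n−k−v+1) + k·(1 + ln(n−k−v))·2^{−v}`,
where `q_{n,k}(i) := 1 − ∏_{j=1}^{k} (1 − 2^{j−1−n+i})`. -/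
theorem stmt10 (n k v : ℕ) (hk : 1 ≤ k) (hkn : k < n) (hv : v ≤ n - k - 1) :
    ∑ i ∈ Finset.Icc 1 (n - k),
        (1 / (i : ℝ)) * (1 - ∏ j ∈ Finset.Icc 1 k, (1 - (2:ℝ) ^ ((j : ℤ) - 1 - n + i)))
      ≤ (v : ℝ) / ((n : ℝ) - k - v + 1)
        + (k : ℝ) * (1 + Real.log ((n : ℝ) - k - v)) * (2:ℝ) ^ (-(v : ℤ)) :=
  stmt10_general n k v hkn hv
end

section
/- Fix an integer k ≥ 1 and reals μ > 0 and α > 0. Let T be a nonnegative real-valued random variable and let g : ℝ → ℝ be a measurable function with 0 ≤ g(ε) ≤ 1 for all ε ∈ [0,1], such that Pr(T > τ) = 1 for all 0 ≤ τ < 1/k and Pr(T > τ) = g(exp(−(μ(kτ−1))^α)) for all τ ≥ 1/k. Then, as an identity in the extended nonnegative reals, E[T] = 1/k + (1/(μkα)) ∫₀¹ g(ε) / (ε·(ln(1/ε))^{1−1/α}) dε. -/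
open MeasureTheory ProbabilityTheory

/-! By the layer-cake formula `E[T] = ∫₀^∞ Pr(T > τ) dτ`. The survival function is `1` on
`(0, 1/k)`, which contributes `1/k`. On the tail, the substitution `ε = exp(-(μ(kτ-1))^α)`
splits into the affine map `u = μk(τ - 1/k)` and the Weibull substitution `ε = exp(-u^α)`;
since `ln(1/ε) = u^α`, the Jacobian `α u^(α-1) ε` of the latter cancels the weight
`1/(ε (ln(1/ε))^(1-1/α))` up to the factor `α`. -/

section

open Set Real
open scoped ENNReal

theorem lintegral_Ioi_zero_eq_add_of_eqOn_Ioo {f : ℝ → ℝ≥0∞} {c : ℝ} (hc : 0 < c)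
    (hf : EqOn f 1 (Ioo 0 c)) :
    ∫⁻ t in Ioi 0, f t = ENNReal.ofReal c + ∫⁻ t in Ioi c, f t := by
  rw [← Ioo_union_Ici_eq_Ioi hc, lintegral_union measurableSet_Ici
    (disjoint_left.mpr fun _ hx hx' => not_le.mpr hx.2 hx'),
    setLIntegral_congr_fun measurableSet_Ioo hf, restrict_Ioi_eq_restrict_Ici]
  simp [Real.volume_Ioo]

theorem lintegral_Ioi_zero_eq_mul_lintegral_Ioi_comp_mul_sub {a : ℝ} (ha : 0 < a) (c : ℝ)
    (f : ℝ → ℝ≥0∞) :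
    ∫⁻ u in Ioi 0, f u = ENNReal.ofReal a * ∫⁻ τ in Ioi c, f (a * (τ - c)) := by
  have himage : (fun τ => a * (τ - c)) '' Ioi c = Ioi 0 := by
    ext u
    refine ⟨?_, fun hu => ⟨u / a + c, ?_, ?_⟩⟩
    · rintro ⟨τ, hτ, rfl⟩
      exact mul_pos ha (sub_pos.mpr hτ)
    · simpa using div_pos (mem_Ioi.mp hu) ha
    · field_simp
      ring
  have hderiv : ∀ τ ∈ Ioi c, HasDerivWithinAt (fun τ => a * (τ - c)) a (Ioi c) τ :=
    fun τ _ => by simpa using (((hasDerivAt_id τ).sub_const c).const_mul a).hasDerivWithinAt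
  have hinj : InjOn (fun τ => a * (τ - c)) (Ioi c) :=
    fun x _ y _ h => by simpa [ha.ne'] using h
  rw [← himage, lintegral_image_eq_lintegral_abs_deriv_mul measurableSet_Ioi hderiv hinj,
    abs_of_pos ha, lintegral_const_mul' _ _ ENNReal.ofReal_ne_top]

theorem image_exp_neg_rpow_Ioi {α : ℝ} (hα : 0 < α) :
    (fun u => exp (-u ^ α)) '' Ioi 0 = Ioo 0 1 := by
  ext ε
  refine ⟨?_, fun ⟨hε0, hε1⟩ => ⟨(-log ε) ^ α⁻¹, ?_, ?_⟩⟩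
  · rintro ⟨u, hu, rfl⟩
    exact ⟨exp_pos _, exp_lt_one_iff.mpr (neg_lt_zero.mpr (rpow_pos_of_pos hu α))⟩
  · exact rpow_pos_of_pos (neg_pos.mpr (log_neg hε0 hε1)) _
  · simp only
    rw [rpow_inv_rpow (neg_pos.mpr (log_neg hε0 hε1)).le hα.ne', neg_neg, exp_log hε0]

theorem lintegral_Ioo_zero_one_eq_lintegral_Ioi_exp_neg_rpow {α : ℝ} (hα : 0 < α)
    (f : ℝ → ℝ≥0∞) :
    ∫⁻ ε in Ioo 0 1, f ε =
      ∫⁻ u in Ioi 0,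
        ENNReal.ofReal (α * u ^ (α - 1) * exp (-u ^ α)) * f (exp (-u ^ α)) := by
  have hderiv : ∀ u ∈ Ioi (0 : ℝ), HasDerivWithinAt (fun u => exp (-u ^ α))
      (exp (-u ^ α) * -(α * u ^ (α - 1))) (Ioi 0) u := fun u hu =>
    ((hasDerivAt_rpow_const (Or.inl (ne_of_gt hu))).neg.exp).hasDerivWithinAt
  have hinj : InjOn (fun u => exp (-u ^ α)) (Ioi 0) := by
    refine StrictAntiOn.injOn fun x hx y hy hxy => exp_lt_exp.mpr (neg_lt_neg ?_)
    exact strictMonoOn_rpow_Ici_of_exponent_pos hα (Ioi_subset_Ici_self hx)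
      (Ioi_subset_Ici_self hy) hxy
  rw [← image_exp_neg_rpow_Ioi hα,
    lintegral_image_eq_lintegral_abs_deriv_mul measurableSet_Ioi hderiv hinj]
  refine setLIntegral_congr_fun measurableSet_Ioi fun u hu => ?_
  rw [abs_mul, abs_neg, abs_of_pos (exp_pos _),
    abs_of_pos (mul_pos hα (rpow_pos_of_pos hu _)), mul_comm (exp _)]

theorem lintegral_Ioo_zero_one_div_mul_log_rpow_eq {α : ℝ} (hα : 0 < α) (g : ℝ → ℝ) :
    ∫⁻ ε in Ioo 0 1, ENNReal.ofReal (g ε / (ε * log (1 / ε) ^ ((1 : ℝ) - 1 / α))) =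
      ENNReal.ofReal α * ∫⁻ u in Ioi 0, ENNReal.ofReal (g (exp (-u ^ α))) := by
  rw [lintegral_Ioo_zero_one_eq_lintegral_Ioi_exp_neg_rpow hα,
    ← lintegral_const_mul' _ _ ENNReal.ofReal_ne_top]
  refine setLIntegral_congr_fun measurableSet_Ioi fun u (hu : 0 < u) => ?_
  have hlog : log (1 / exp (-u ^ α)) ^ ((1 : ℝ) - 1 / α) = u ^ (α - 1) := by
    rw [one_div, log_inv, log_exp, neg_neg, ← rpow_mul hu.le]
    congr 1
    field_simp
  have hpow : 0 < u ^ (α - 1) := rpow_pos_of_pos hu _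
  rw [hlog, ← ENNReal.ofReal_mul (by positivity), ← ENNReal.ofReal_mul hα.le]
  congr 1
  field_simp

end

theorem stmt13_general {Ω : Type*} [MeasureSpace Ω]
    (k : ℕ) (hk : 1 ≤ k) (μ α : ℝ) (hμ : 0 < μ) (hα : 0 < α)
    (T : Ω → ℝ) (hT : Measurable T) (hTnn : ∀ ω, 0 ≤ T ω)
    (g : ℝ → ℝ)
    (h1 : ∀ τ : ℝ, 0 ≤ τ → τ < 1 / (k : ℝ) → ℙ {ω : Ω | τ < T ω} = 1)
    (h2 : ∀ τ : ℝ, 1 / (k : ℝ) ≤ τ →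
        ℙ {ω : Ω | τ < T ω}
          = ENNReal.ofReal (g (Real.exp (-((μ * ((k : ℝ) * τ - 1)) ^ α))))) :
    ∫⁻ ω, ENNReal.ofReal (T ω) ∂ℙ
      = ENNReal.ofReal (1 / (k : ℝ))
        + ENNReal.ofReal (1 / (μ * k * α))
          * ∫⁻ ε in Set.Ioo (0:ℝ) 1,
              ENNReal.ofReal (g ε / (ε * Real.log (1 / ε) ^ ((1:ℝ) - 1 / α))) := by
  have hk0 : (0 : ℝ) < k := by exact_mod_cast hk
  set tail := ∫⁻ τ in Set.Ioi (1 / (k : ℝ)),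
    ENNReal.ofReal (g (Real.exp (-(μ * k * (τ - 1 / k)) ^ α)))
  have hexpect :
      ∫⁻ ω, ENNReal.ofReal (T ω) ∂ℙ = ENNReal.ofReal (1 / (k : ℝ)) + tail := by
    rw [lintegral_eq_lintegral_meas_lt _ (.of_forall hTnn) hT.aemeasurable,
      lintegral_Ioi_zero_eq_add_of_eqOn_Ioo (by positivity) fun τ hτ => h1 τ hτ.1.le hτ.2]
    refine congrArg _ (setLIntegral_congr_fun measurableSet_Ioi fun τ hτ => ?_)
    rw [h2 τ (le_of_lt hτ)]
    field_simp
  have hdensity : ∫⁻ ε in Set.Ioo (0:ℝ) 1,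
      ENNReal.ofReal (g ε / (ε * Real.log (1 / ε) ^ ((1:ℝ) - 1 / α)))
        = ENNReal.ofReal α * (ENNReal.ofReal (μ * k) * tail) := by
    rw [lintegral_Ioo_zero_one_div_mul_log_rpow_eq hα,
      lintegral_Ioi_zero_eq_mul_lintegral_Ioi_comp_mul_sub (a := μ * k) (by positivity)
        (1 / (k : ℝ))]
  rw [hexpect, hdensity, ← mul_assoc, ← mul_assoc, ← ENNReal.ofReal_mul (by positivity),
    ← ENNReal.ofReal_mul (by positivity)]
  field_simp
  simp

/-- Average execution time under the shifted-Weibull server model. For `k ≥ 1`, `μ > 0`,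
`α > 0`, a nonnegative random variable `T` with `Pr(T > τ) = 1` for `0 ≤ τ < 1/k` and
`Pr(T > τ) = g(exp(−(μ(kτ−1))^α))` for `τ ≥ 1/k` (with `g : ℝ → [0,1]` measurable), we
have, as an identity in `ℝ≥0∞`:
`E[T] = 1/k + (1/(μkα)) ∫₀¹ g(ε)/(ε·(ln(1/ε))^{1−1/α}) dε`. -/
theorem stmt13 {Ω : Type*} [MeasureSpace Ω] [IsProbabilityMeasure (ℙ : Measure Ω)]
    (k : ℕ) (hk : 1 ≤ k) (μ α : ℝ) (hμ : 0 < μ) (hα : 0 < α)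
    (T : Ω → ℝ) (hT : Measurable T) (hTnn : ∀ ω, 0 ≤ T ω)
    (g : ℝ → ℝ) (hg : Measurable g)
    (hg01 : ∀ ε ∈ Set.Icc (0:ℝ) 1, g ε ∈ Set.Icc (0:ℝ) 1)
    (h1 : ∀ τ : ℝ, 0 ≤ τ → τ < 1 / (k : ℝ) → ℙ {ω : Ω | τ < T ω} = 1)
    (h2 : ∀ τ : ℝ, 1 / (k : ℝ) ≤ τ →
        ℙ {ω : Ω | τ < T ω}
          = ENNReal.ofReal (g (Real.exp (-((μ * ((k : ℝ) * τ - 1)) ^ α))))) :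
    ∫⁻ ω, ENNReal.ofReal (T ω) ∂ℙ
      = ENNReal.ofReal (1 / (k : ℝ))
        + ENNReal.ofReal (1 / (μ * k * α))
          * ∫⁻ ε in Set.Ioo (0:ℝ) 1,
              ENNReal.ofReal (g ε / (ε * Real.log (1 / ε) ^ ((1:ℝ) - 1 / α))) :=
  stmt13_general k hk μ α hμ hα T hT hTnn g h1 h2
end
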